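/- Suppose ‖Ĥ − H‖₂ ≤ C_H·η and ‖Ŝ − S‖₂ ≤ C_S·η. Then for every nonzero vector a ∈ ℂ^d with E′(η, a) < 0, one has Ê(η, a) < 0. -/

import Mathlib

open Matrix
open scoped ComplexOrder
open scoped InnerProductSpace

/-- Spectral norm (L2 operator norm) of a complex square matrix. -/
noncomputable def specNorm {d : ℕ} (A : Matrix (Fin d) (Fin d) ℂ) : ℝ :=
  ‖Matrix.toEuclideanCLM (𝕜 := ℂ) A‖

/-- Rayleigh quotient ⟨A⟩(a) = (a† A a)/(a† a) (real-valued for Hermitian `A`). -/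
noncomputable def rq {d : ℕ} (A : Matrix (Fin d) (Fin d) ℂ) (a : Fin d → ℂ) : ℝ :=
  (star a ⬝ᵥ A.mulVec a).re / (star a ⬝ᵥ a).re

lemma bnd {d : ℕ} (M : Matrix (Fin d) (Fin d) ℂ) (a : Fin d → ℂ) :
    |(star a ⬝ᵥ M.mulVec a).re| ≤ specNorm M * (star a ⬝ᵥ a).re := by
  set x : EuclideanSpace ℂ (Fin d) := (WithLp.equiv 2 _).symm a
  have h1 : (⟪x, (Matrix.toEuclideanCLM (𝕜 := ℂ) M) x⟫_ℂ) = star a ⬝ᵥ M.mulVec a := by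
    exact dotProduct_comm _ _
  have h2 : (⟪x, x⟫_ℂ) = star a ⬝ᵥ a := dotProduct_comm _ _
  have hxx : (star a ⬝ᵥ a).re = ‖x‖ ^ 2 := by
    rw [← inner_self_eq_norm_sq (𝕜 := ℂ) x, ← h2]; rfl
  calc |(star a ⬝ᵥ M.mulVec a).re| ≤ ‖star a ⬝ᵥ M.mulVec a‖ := Complex.abs_re_le_norm _
    _ = ‖(⟪x, (Matrix.toEuclideanCLM (𝕜 := ℂ) M) x⟫_ℂ)‖ := by rw [h1]
    _ ≤ ‖x‖ * ‖(Matrix.toEuclideanCLM (𝕜 := ℂ) M) x‖ := norm_inner_le_norm _ _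
    _ ≤ ‖x‖ * (specNorm M * ‖x‖) := by
        gcongr; exact (Matrix.toEuclideanCLM (𝕜 := ℂ) M).le_opNorm x
    _ = specNorm M * (star a ⬝ᵥ a).re := by rw [hxx]; ring

lemma npos {d : ℕ} {a : Fin d → ℂ} (ha : a ≠ 0) : 0 < (star a ⬝ᵥ a).re := by
  set x : EuclideanSpace ℂ (Fin d) := (WithLp.equiv 2 _).symm a
  have h2 : (⟪x, x⟫_ℂ) = star a ⬝ᵥ a := dotProduct_comm _ _
  have hx : x ≠ 0 := by
    intro h
    exact ha (by simpa [x] using h)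
  have h5 : (star a ⬝ᵥ a).re = ‖x‖ ^ 2 := by
    rw [← inner_self_eq_norm_sq (𝕜 := ℂ) x, ← h2]; rfl
  rw [h5]
  exact pow_pos (norm_pos_iff.mpr hx) 2

theorem stmt2 {d : ℕ} (hd : 1 ≤ d)
    (H S Hhat Shat : Matrix (Fin d) (Fin d) ℂ)
    (hH : H.IsHermitian) (hS : S.IsHermitian)
    (hHhat : Hhat.IsHermitian) (hShat : Shat.IsHermitian)
    (hSpd : S.PosDef)
    (CH CS η : ℝ) (hCH : 0 < CH) (hCS : 0 < CS) (hη : 0 < η)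
    (hHnorm : specNorm (Hhat - H) ≤ CH * η)
    (hSnorm : specNorm (Shat - S) ≤ CS * η) :
    ∀ a : Fin d → ℂ, a ≠ 0 →
      (rq H a + 2 * CH * η) / (rq S a + 2 * CS * η) < 0 →
      (rq Hhat a + CH * η) / (rq Shat a + CS * η) < 0 := by
  intro a ha hlt
  have hn : 0 < (star a ⬝ᵥ a).re := npos ha
  have hSq : 0 < rq S a := by
    have := (posDef_iff_dotProduct_mulVec.mp hSpd).2 ha
    have hre : 0 < (star a ⬝ᵥ S.mulVec a).re := by
      rw [Complex.lt_def] at this; simpa using this.1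
    exact div_pos hre hn
  -- difference bounds
  have key : ∀ (A B : Matrix (Fin d) (Fin d) ℂ) (C : ℝ), specNorm (B - A) ≤ C →
      |rq B a - rq A a| ≤ C := by
    intro A B C hC
    have hdiff : rq B a - rq A a = (star a ⬝ᵥ (B - A).mulVec a).re / (star a ⬝ᵥ a).re := by
      unfold rq
      rw [Matrix.sub_mulVec, dotProduct_sub, Complex.sub_re, sub_div]
    rw [hdiff, abs_div, abs_of_pos hn, div_le_iff₀ hn]
    calc |(star a ⬝ᵥ (B - A).mulVec a).re| ≤ specNorm (B - A) * (star a ⬝ᵥ a).re := bnd _ _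
      _ ≤ C * (star a ⬝ᵥ a).re := by gcongr
  have hHd := key H Hhat (CH * η) hHnorm
  have hSd := key S Shat (CS * η) hSnorm
  rw [abs_sub_le_iff] at hHd hSd
  -- denominator of primed quotient positive ⇒ numerator negative
  have hden : 0 < rq S a + 2 * CS * η := by positivity
  have hnum : rq H a + 2 * CH * η < 0 := by
    by_contra h
    push_neg at h
    exact absurd (div_nonneg h hden.le) (not_le.mpr hlt)
  have h1 : rq Hhat a + CH * η < 0 := by nlinarith [hHd.2]
  have h2 : 0 < rq Shat a + CS * η := by nlinarith [hSd.1]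
  exact div_neg_of_neg_of_pos h1 h2
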